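/- arXiv:1901.04167 — 2 statements merged into one kernel-verified Lean document; each statement's English description precedes it below -/
import Mathlib

section
/- Let $(S_n)_{n \geq 1}$ be a sequence of nonnegative random variables with $\mathbb{E}[S_n] = 1/\mu$ for all $n$, where $\mu > 0$. Suppose there exists $x_0 > 0$ such that for all $x > x_0$: $\lim_{n \to \infty} \mathbb{P}(S_n > x) = 0$ and $\lim_{n \to \infty} \mathbb{E}[S_n \cdot \mathbb{1}_{\{S_n < x\}}] = 0$. Then $\lim_{n \to \infty} \mathbb{E}[S_n^2] = +\infty$. -/
open MeasureTheory ProbabilityTheory Filter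

theorem stmt5 {Ω : Type*} [MeasureSpace Ω] [IsProbabilityMeasure (ℙ : Measure Ω)]
    (S : ℕ → Ω → ℝ) (hS : ∀ n, Measurable (S n)) (hSnn : ∀ n, ∀ᵐ ω ∂ℙ, 0 ≤ S n ω)
    (hSint : ∀ n, Integrable (S n)) (μ : ℝ) (hμ : 0 < μ)
    (hmean : ∀ n, ∫ ω, S n ω ∂ℙ = 1 / μ)
    (x₀ : ℝ) (hx₀ : 0 < x₀)
    (hatom : ∀ n, ∀ x : ℝ, x₀ < x → ℙ {ω | S n ω = x} = 0)
    (htail : ∀ x : ℝ, x₀ < x →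
      Tendsto (fun n => ℙ {ω | x < S n ω}) atTop (nhds 0))
    (htrunc : ∀ x : ℝ, x₀ < x →
      Tendsto (fun n => ∫ ω in {ω | S n ω < x}, S n ω ∂ℙ) atTop (nhds 0)) :
    Tendsto (fun n => ∫⁻ ω, ENNReal.ofReal ((S n ω) ^ 2) ∂ℙ) atTop (nhds ⊤) := by
  rw [ENNReal.tendsto_nhds_top_iff_nat]
  intro N
  set x : ℝ := max (x₀ + 1) (μ * (N + 2)) with hxdef
  have hxx₀ : x₀ < x := lt_of_lt_of_le (lt_add_one x₀) (le_max_left _ _)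
  have hxpos : 0 < x := hx₀.trans hxx₀
  have hxμ : (N : ℝ) + 2 ≤ x / μ := by
    rw [le_div_iff₀ hμ]
    calc ((N : ℝ) + 2) * μ = μ * (N + 2) := by ring
    _ ≤ x := le_max_right _ _
  have ht := htrunc x hxx₀
  have hev : ∀ᶠ n in atTop, ∫ ω in {ω | S n ω < x}, S n ω ∂ℙ < 1 / x := by
    have := ht.eventually (eventually_lt_nhds (by positivity : (0:ℝ) < 1 / x))
    exact this
  filter_upwards [hev] with n hn
  set t : ℝ := ∫ ω in {ω | S n ω < x}, S n ω ∂ℙ with htdef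
  have hsmeas : MeasurableSet {ω | S n ω < x} := measurableSet_lt (hS n) measurable_const
  have hA : MeasurableSet {ω | S n ω < x}ᶜ := hsmeas.compl
  have hsplit : t + ∫ ω in {ω | S n ω < x}ᶜ, S n ω ∂ℙ = 1 / μ := by
    rw [htdef, integral_add_compl hsmeas (hSint n), hmean n]
  have hAint : ∫ ω in {ω | S n ω < x}ᶜ, S n ω ∂ℙ = 1 / μ - t := by linarith
  have hNlt : (N : ℝ) < x * (1 / μ - t) := by
    have h1 : x * (1 / μ - t) = x / μ - x * t := by ring
    have h2 : x * t < x * (1 / x) := by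
      rcases lt_or_ge t 0 with h | h
      · nlinarith
      · exact mul_lt_mul_of_pos_left hn hxpos
    rw [mul_one_div, div_self (ne_of_gt hxpos)] at h2
    nlinarith
  have hkey : ENNReal.ofReal (x * (1 / μ - t)) ≤ ∫⁻ ω, ENNReal.ofReal ((S n ω) ^ 2) ∂ℙ := by
    have hint : ENNReal.ofReal (∫ ω in {ω | S n ω < x}ᶜ, S n ω ∂ℙ)
        = ∫⁻ ω in {ω | S n ω < x}ᶜ, ENNReal.ofReal (S n ω) ∂ℙ :=
      ofReal_integral_eq_lintegral_ofReal ((hSint n).restrict)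
        (ae_restrict_of_ae (hSnn n))
    calc ENNReal.ofReal (x * (1 / μ - t))
        = ENNReal.ofReal x * ENNReal.ofReal (1 / μ - t) :=
          ENNReal.ofReal_mul hxpos.le
      _ = ENNReal.ofReal x * ∫⁻ ω in {ω | S n ω < x}ᶜ, ENNReal.ofReal (S n ω) ∂ℙ := by
          rw [← hAint] at *; rw [hint]
      _ = ∫⁻ ω in {ω | S n ω < x}ᶜ, ENNReal.ofReal x * ENNReal.ofReal (S n ω) ∂ℙ := by
          rw [lintegral_const_mul' _ _ ENNReal.ofReal_ne_top]
      _ = ∫⁻ ω in {ω | S n ω < x}ᶜ, ENNReal.ofReal (x * S n ω) ∂ℙ := by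
          simp_rw [← ENNReal.ofReal_mul hxpos.le]
      _ ≤ ∫⁻ ω in {ω | S n ω < x}ᶜ, ENNReal.ofReal ((S n ω) ^ 2) ∂ℙ := by
          refine setLIntegral_mono (ENNReal.measurable_ofReal.comp ((hS n).pow_const 2)) ?_
          intro ω hω
          have hωx : x ≤ S n ω := not_lt.mp hω
          apply ENNReal.ofReal_le_ofReal
          nlinarith
      _ ≤ ∫⁻ ω, ENNReal.ofReal ((S n ω) ^ 2) ∂ℙ := setLIntegral_le_lintegral _ _
  calc (N : ENNReal) = ENNReal.ofReal (N : ℝ) := by simp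
    _ < ENNReal.ofReal (x * (1 / μ - t)) := by
        exact ENNReal.ofReal_lt_ofReal_iff (by nlinarith) |>.mpr hNlt
    _ ≤ _ := hkey
end

section
/- Let $(X_k)_{k \geq 1}$ be i.i.d. nonnegative random variables with $\mathbb{E}[X_1] = 1/\lambda > 0$, and for each $n$, let $(S^{(n)}_l)_{l \geq 1}$ be i.i.d. nonnegative random variables, independent of $(X_k)$, with $\mathbb{E}[S^{(n)}_1] = 1/\mu$ for all $n$ and with atomless distributions. Define $Z_n = \inf_{l \geq 0}\left(\sum_{k=1}^{l} X_k + S^{(n)}_{l+1}\right)$. If $\mathbb{E}[Z_n] \to 0$ as $n \to \infty$, then $\mathbb{E}[(S^{(n)}_1)^2] \to +\infty$. -/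
/-!
Taking `l = 0` and `l ≥ 1` in the infimum gives `Z_n ≥ min(S, X)` with `S = S⁽ⁿ⁾₁`, `X = X₁`.
Truncate both at a level `a`: for `s ≤ a`, `a · min(s, x) ≥ s · min(x, a)`, so by independence
`a · 𝔼[min(S, X)] ≥ 𝔼[S; S ≤ a] · 𝔼[min(X, a)]`, and Markov's bound on the tail gives
`𝔼[S; S ≤ a] ≥ 1/μ - 𝔼[S²]/a`. With `a = 2μ(M + 1)`, the bound `𝔼[S²] ≤ M` therefore forces
`𝔼[Z_n] ≥ 𝔼[min(X, a)] / (2μa) > 0`, which is incompatible with `𝔼[Z_n] → 0`.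
-/

open MeasureTheory ProbabilityTheory Filter Set
open scoped NNReal

lemma indicator_Iic_mul_min_le {s x a : ℝ} (hs : 0 ≤ s) (hx : 0 ≤ x) (ha : 0 ≤ a) :
    (Iic a).indicator id s * min x a ≤ a * min s x := by
  by_cases hsa : s ≤ a
  · rw [indicator_of_mem (mem_Iic.2 hsa), id, mul_min_of_nonneg _ _ ha]
    exact le_min (by rw [mul_comm]; exact mul_le_mul_of_nonneg_right (min_le_right _ _) hs)
      ((mul_le_mul_of_nonneg_left (min_le_left _ _) hs).trans (mul_le_mul_of_nonneg_right hsa hx))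
  · rw [indicator_of_notMem (notMem_Iic.2 (not_le.1 hsa)), zero_mul]
    exact mul_nonneg ha (le_min hs hx)

lemma sub_indicator_Iic_le_sq_div {s a : ℝ} (hs : 0 ≤ s) (ha : 0 < a) :
    s - (Iic a).indicator id s ≤ s ^ 2 / a := by
  by_cases hsa : s ≤ a
  · rw [indicator_of_mem (mem_Iic.2 hsa), id, sub_self]
    positivity
  · rw [indicator_of_notMem (notMem_Iic.2 (not_le.1 hsa)), sub_zero, le_div_iff₀ ha, sq]
    exact mul_le_mul_of_nonneg_left (not_le.1 hsa).le hs

lemma min_le_iInf_sum_add {x s : ℕ → ℝ} (hx : ∀ k, 0 ≤ x k) (hs : ∀ l, 0 ≤ s l) :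
    min (s 1) (x 1) ≤ ⨅ l : ℕ, ((∑ k ∈ Finset.Icc 1 l, x k) + s (l + 1)) := by
  refine le_ciInf fun l => ?_
  rcases l with _ | l
  · simp
  · have hx1 : x 1 ≤ ∑ k ∈ Finset.Icc 1 (l + 1), x k :=
      Finset.single_le_sum (fun k _ => hx k) (by simp)
    linarith [min_le_right (s 1) (x 1), hs (l + 1 + 1)]

lemma iInf_sum_add_le {x s : ℕ → ℝ} (hx : ∀ k, 0 ≤ x k) (hs : ∀ l, 0 ≤ s l) :
    ⨅ l : ℕ, ((∑ k ∈ Finset.Icc 1 l, x k) + s (l + 1)) ≤ s 1 := by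
  have hbdd : BddBelow (range fun l : ℕ => (∑ k ∈ Finset.Icc 1 l, x k) + s (l + 1)) :=
    ⟨0, by
      rintro _ ⟨l, rfl⟩
      exact add_nonneg (Finset.sum_nonneg fun k _ => hx k) (hs _)⟩
  simpa using ciInf_le hbdd 0

section

variable {Ω : Type*} [MeasurableSpace Ω] {P : Measure Ω}

lemma integrable_sq_of_lintegral_le {f : Ω → ℝ} (hf : AEStronglyMeasurable f P) {m : ℝ≥0}
    (h : ∫⁻ ω, ENNReal.ofReal (f ω ^ 2) ∂P ≤ m) : Integrable (fun ω => f ω ^ 2) P :=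
  ⟨hf.pow 2, (hasFiniteIntegral_iff_ofReal (ae_of_all _ fun _ => sq_nonneg _)).2
    (h.trans_lt ENNReal.coe_lt_top)⟩

lemma integral_sq_le_of_lintegral_le {f : Ω → ℝ} (hf : AEStronglyMeasurable f P) {m : ℝ≥0}
    (h : ∫⁻ ω, ENNReal.ofReal (f ω ^ 2) ∂P ≤ m) : ∫ ω, f ω ^ 2 ∂P ≤ m := by
  rw [← ofReal_integral_eq_lintegral_ofReal (integrable_sq_of_lintegral_le hf h)
    (ae_of_all _ fun _ => sq_nonneg _)] at h
  simpa using (ENNReal.ofReal_le_iff_le_toReal ENNReal.coe_ne_top).1 h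

lemma integral_min_const_pos {X : Ω → ℝ} (hXnn : 0 ≤ᵐ[P] X) (hX : 0 < ∫ ω, X ω ∂P) {a : ℝ}
    (ha : 0 < a) : 0 < ∫ ω, min (X ω) a ∂P := by
  have hXint : Integrable X P := Integrable.of_integral_ne_zero hX.ne'
  have hmin_nn : 0 ≤ᵐ[P] fun ω => min (X ω) a := hXnn.mono fun ω h => le_min h ha.le
  have hmin_int : Integrable (fun ω => min (X ω) a) P :=
    hXint.mono (hXint.aestronglyMeasurable.inf aestronglyMeasurable_const) <|
      hXnn.mono fun ω h => by
        rw [Real.norm_of_nonneg (le_min h ha.le), Real.norm_of_nonneg h]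
        exact min_le_left _ _
  refine (integral_nonneg_of_ae hmin_nn).lt_of_ne fun h0 => hX.ne' ?_
  have hX0 : X =ᵐ[P] 0 := by
    filter_upwards [(integral_eq_zero_iff_of_nonneg_ae hmin_nn hmin_int).1 h0.symm, hXnn]
      with ω hmin hω
    exact le_antisymm (le_of_not_gt fun hpos => (lt_min hpos ha).ne' hmin) hω
  simp [integral_congr_ae hX0]

lemma integral_sub_integral_sq_div_le {S : Ω → ℝ} (hSnn : 0 ≤ᵐ[P] S) (hSint : Integrable S P)
    (hS2 : Integrable (fun ω => S ω ^ 2) P) {a : ℝ} (ha : 0 < a) :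
    ∫ ω, S ω ∂P - (∫ ω, S ω ^ 2 ∂P) / a ≤ ∫ ω, (Iic a).indicator id (S ω) ∂P := by
  have htrunc : Integrable (fun ω => (Iic a).indicator id (S ω)) P :=
    hSint.mono ((measurable_id.indicator measurableSet_Iic).comp_aemeasurable
      hSint.aemeasurable).aestronglyMeasurable
      (ae_of_all _ fun ω => norm_indicator_le_norm_self _ _)
  have htail : ∫ ω, (S ω - (Iic a).indicator id (S ω)) ∂P ≤ ∫ ω, S ω ^ 2 / a ∂P :=
    integral_mono_ae (hSint.sub htrunc) (hS2.div_const a)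
      (hSnn.mono fun ω h => sub_indicator_Iic_le_sq_div h ha)
  rw [integral_sub hSint htrunc, integral_div] at htail
  linarith

lemma integral_sub_mul_integral_min_le {S X : Ω → ℝ} (hS : Measurable S) (hX : Measurable X)
    (hSnn : 0 ≤ᵐ[P] S) (hXnn : 0 ≤ᵐ[P] X) (hSX : IndepFun S X P) (hSint : Integrable S P)
    (hS2 : Integrable (fun ω => S ω ^ 2) P) {a : ℝ} (ha : 0 < a) :
    (∫ ω, S ω ∂P - (∫ ω, S ω ^ 2 ∂P) / a) * ∫ ω, min (X ω) a ∂P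
      ≤ a * ∫ ω, min (S ω) (X ω) ∂P := by
  have hmin_int : Integrable (fun ω => min (S ω) (X ω)) P :=
    hSint.mono (hS.min hX).aestronglyMeasurable <| (hSnn.and hXnn).mono fun ω h => by
      rw [Real.norm_of_nonneg (le_min h.1 h.2), Real.norm_of_nonneg h.1]
      exact min_le_left _ _
  calc (∫ ω, S ω ∂P - (∫ ω, S ω ^ 2 ∂P) / a) * ∫ ω, min (X ω) a ∂P
      ≤ (∫ ω, (Iic a).indicator id (S ω) ∂P) * ∫ ω, min (X ω) a ∂P :=
        mul_le_mul_of_nonneg_right (integral_sub_integral_sq_div_le hSnn hSint hS2 ha)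
          (integral_nonneg_of_ae (hXnn.mono fun ω h => le_min h ha.le))
    _ = ∫ ω, (Iic a).indicator id (S ω) * min (X ω) a ∂P :=
        (hSX.integral_fun_comp_mul_comp hS.aemeasurable hX.aemeasurable
          (measurable_id.indicator measurableSet_Iic).aestronglyMeasurable
          (measurable_id.min measurable_const).aestronglyMeasurable).symm
    _ ≤ ∫ ω, a * min (S ω) (X ω) ∂P :=
        integral_mono_of_nonneg
          ((hSnn.and hXnn).mono fun ω h =>
            mul_nonneg (indicator_nonneg (fun _ _ => h.1) _) (le_min h.2 ha.le))
          (hmin_int.const_mul a)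
          ((hSnn.and hXnn).mono fun ω h => indicator_Iic_mul_min_le h.1 h.2 ha.le)
    _ = a * ∫ ω, min (S ω) (X ω) ∂P := integral_const_mul a _

lemma integral_min_le_integral_iInf_sum_add {X S : ℕ → Ω → ℝ} (hX : ∀ k, Measurable (X k))
    (hS : ∀ l, Measurable (S l)) (hXnn : ∀ k, 0 ≤ᵐ[P] X k) (hSnn : ∀ l, 0 ≤ᵐ[P] S l)
    (hSint : Integrable (S 1) P) :
    ∫ ω, min (S 1 ω) (X 1 ω) ∂P
      ≤ ∫ ω, ⨅ l : ℕ, ((∑ k ∈ Finset.Icc 1 l, X k ω) + S (l + 1) ω) ∂P := by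
  have hnn : ∀ᵐ ω ∂P, (∀ k, 0 ≤ X k ω) ∧ ∀ l, 0 ≤ S l ω :=
    (ae_all_iff.2 hXnn).and (ae_all_iff.2 hSnn)
  have hZ_int : Integrable
      (fun ω => ⨅ l : ℕ, ((∑ k ∈ Finset.Icc 1 l, X k ω) + S (l + 1) ω)) P :=
    hSint.mono (Measurable.iInf fun l =>
        (Finset.measurable_sum _ fun k _ => hX k).add (hS _)).aestronglyMeasurable <|
      hnn.mono fun ω h => by
        have hZ_nn := (le_min (h.2 1) (h.1 1)).trans (min_le_iInf_sum_add h.1 h.2)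
        rw [Real.norm_of_nonneg hZ_nn, Real.norm_of_nonneg (h.2 1)]
        exact iInf_sum_add_le h.1 h.2
  exact integral_mono_of_nonneg (hnn.mono fun ω h => le_min (h.2 1) (h.1 1)) hZ_int
    (hnn.mono fun ω h => min_le_iInf_sum_add h.1 h.2)

end

theorem stmt11_general {Ω : Type*} [MeasureSpace Ω]
    (X : ℕ → Ω → ℝ) (S : ℕ → ℕ → Ω → ℝ)
    (hX : ∀ k, Measurable (X k)) (hS : ∀ n l, Measurable (S n l))
    (hXnn : ∀ k, ∀ᵐ ω ∂ℙ, 0 ≤ X k ω) (hSnn : ∀ n l, ∀ᵐ ω ∂ℙ, 0 ≤ S n l ω)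
    (lam : ℝ) (hlam : 0 < lam)
    (hXmean : ∫ ω, X 1 ω ∂ℙ = 1 / lam)
    (hSXindep : ∀ n l k, IndepFun (S n l) (X k) ℙ)
    (hSint : ∀ n, Integrable (S n 1)) (μ : ℝ) (hμ : 0 < μ)
    (hSmean : ∀ n, ∫ ω, S n 1 ω ∂ℙ = 1 / μ)
    (hZ : Tendsto
      (fun n => ∫ ω, (⨅ l : ℕ, ((∑ k ∈ Finset.Icc 1 l, X k ω) + S n (l + 1) ω)) ∂ℙ)
      atTop (nhds 0)) :
    Tendsto (fun n => ∫⁻ ω, ENNReal.ofReal ((S n 1 ω) ^ 2) ∂ℙ) atTop (nhds ⊤) := by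
  rw [ENNReal.tendsto_nhds_top_iff_nnreal]
  intro M
  set a : ℝ := 2 * μ * (M + 1)
  have ha : 0 < a := by positivity
  set b : ℝ := ∫ ω, min (X 1 ω) a
  have hb : 0 < b := integral_min_const_pos (hXnn 1) (by rw [hXmean]; positivity) ha
  have hbound : ∀ n, ∫⁻ ω, ENNReal.ofReal ((S n 1 ω) ^ 2) ∂ℙ ≤ M →
      b / (2 * μ * a) ≤ ∫ ω, (⨅ l : ℕ, ((∑ k ∈ Finset.Icc 1 l, X k ω) + S n (l + 1) ω)) := by
    intro n hn
    have hS2 := integrable_sq_of_lintegral_le (hS n 1).aestronglyMeasurable hn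
    have hS2_le : (∫ ω, S n 1 ω ^ 2) / a ≤ 1 / (2 * μ) := by
      rw [div_le_div_iff₀ ha (by positivity)]
      nlinarith [integral_sq_le_of_lintegral_le (hS n 1).aestronglyMeasurable hn]
    have hkey := integral_sub_mul_integral_min_le (hS n 1) (hX 1) (hSnn n 1) (hXnn 1)
      (hSXindep n 1 1) (hSint n) hS2 ha
    rw [hSmean] at hkey
    calc b / (2 * μ * a) = (1 / μ - 1 / (2 * μ)) * b / a := by field_simp; ring
      _ ≤ (1 / μ - (∫ ω, S n 1 ω ^ 2) / a) * b / a := by gcongr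
      _ ≤ ∫ ω, min (S n 1 ω) (X 1 ω) := by rw [div_le_iff₀ ha, mul_comm _ a]; exact hkey
      _ ≤ _ := integral_min_le_integral_iInf_sum_add hX (hS n) hXnn (hSnn n) (hSint n)
  filter_upwards [(tendsto_order.1 hZ).2 _ (by positivity : 0 < b / (2 * μ * a))] with n hn
  by_contra! h
  exact (hbound n h).not_gt hn

theorem stmt11 {Ω : Type*} [MeasureSpace Ω] [IsProbabilityMeasure (ℙ : Measure Ω)]
    (X : ℕ → Ω → ℝ) (S : ℕ → ℕ → Ω → ℝ)
    (hX : ∀ k, Measurable (X k)) (hS : ∀ n l, Measurable (S n l))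
    (hXnn : ∀ k, ∀ᵐ ω ∂ℙ, 0 ≤ X k ω) (hSnn : ∀ n l, ∀ᵐ ω ∂ℙ, 0 ≤ S n l ω)
    (hXiid : iIndepFun X ℙ)
    (hXid : ∀ k, IdentDistrib (X k) (X 1) ℙ ℙ)
    (hXint : Integrable (X 1)) (lam : ℝ) (hlam : 0 < lam)
    (hXmean : ∫ ω, X 1 ω ∂ℙ = 1 / lam)
    (hSiid : ∀ n, iIndepFun (S n) ℙ)
    (hSid : ∀ n l, IdentDistrib (S n l) (S n 1) ℙ ℙ)
    (hSXindep : ∀ n l k, IndepFun (S n l) (X k) ℙ)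
    (hSint : ∀ n, Integrable (S n 1)) (μ : ℝ) (hμ : 0 < μ)
    (hSmean : ∀ n, ∫ ω, S n 1 ω ∂ℙ = 1 / μ)
    (hatomless : ∀ n, ∀ x : ℝ, 0 < x → ℙ {ω | S n 1 ω = x} = 0)
    (hZ : Tendsto
      (fun n => ∫ ω, (⨅ l : ℕ, ((∑ k ∈ Finset.Icc 1 l, X k ω) + S n (l + 1) ω)) ∂ℙ)
      atTop (nhds 0)) :
    Tendsto (fun n => ∫⁻ ω, ENNReal.ofReal ((S n 1 ω) ^ 2) ∂ℙ) atTop (nhds ⊤) :=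
  stmt11_general X S hX hS hXnn hSnn lam hlam hXmean hSXindep hSint μ hμ hSmean hZ
end
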